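/- arXiv:2604.08946 — 6 statements merged into one kernel-verified Lean document; each statement's English description precedes it below -/
import Mathlib

section
/- For every natural number k and every positive natural number s, there exists ε > 0 such that for all real numbers a, b: a·(a+b)^(1 + 2s/(2k+1)) ≥ ε·|a|^(2 + 2s/(2k+1)) − |b|^(2 + 2s/(2k+1)). -/
lemma young_type_key (c : ℝ) (hc : 0 ≤ c) (a b : ℝ) (ha : 0 < a) :
    a * Real.sign (a + b) * |a + b| ^ (1 + c) + |b| ^ (2 + c) ≥
      (1/2 : ℝ) ^ (2 + c) * a ^ (2 + c) := by
  have h1c : (0:ℝ) ≤ 1 + c := by linarith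
  have hhalf : ((1/2 : ℝ)) ^ (2 + c) * a ^ (2 + c) = (a/2) ^ (2+c) := by
    rw [← Real.mul_rpow (by norm_num) ha.le]
    norm_num
    ring_nf
  rcases le_or_gt (-(a/2)) b with hb | hb
  · -- b ≥ -a/2, so a + b ≥ a/2 > 0
    have hab : 0 < a + b := by linarith
    rw [Real.sign_of_pos hab, abs_of_pos hab, hhalf]
    have h2 : (a/2)^(2+c) = (a/2) * (a/2)^(1+c) := by
      rw [show (2:ℝ)+c = 1 + (1+c) by ring, Real.rpow_add (by linarith), Real.rpow_one]
    have h3 : (a/2)^(1+c) ≤ (a+b)^(1+c) :=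
      Real.rpow_le_rpow (by linarith) (by linarith) h1c
    have h4 : (0:ℝ) ≤ |b|^(2+c) := Real.rpow_nonneg (abs_nonneg b) _
    have h5 : (0:ℝ) ≤ (a/2)^(1+c) := Real.rpow_nonneg (by linarith) _
    nlinarith
  · rcases le_or_gt 0 (a+b) with hab | hab
    · -- 0 ≤ a+b, b < -a/2
      have hsign : 0 ≤ Real.sign (a+b) := by
        rcases hab.eq_or_lt with h | h
        · rw [← h, Real.sign_zero]
        · rw [Real.sign_of_pos h]; norm_num
      have hterm : 0 ≤ a * Real.sign (a+b) * |a+b|^(1+c) :=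
        mul_nonneg (mul_nonneg ha.le hsign) (Real.rpow_nonneg (abs_nonneg _) _)
      have hb' : a/2 ≤ |b| := by
        rw [abs_of_neg (by linarith : b < 0)]; linarith
      have h6 : (a/2)^(2+c) ≤ |b|^(2+c) :=
        Real.rpow_le_rpow (by linarith) hb' (by linarith)
      rw [hhalf]; linarith
    · -- a + b < 0
      have hbneg : b < 0 := by linarith
      have hβa : a < -b := by linarith
      rw [Real.sign_of_neg hab, abs_of_neg hab, abs_of_neg hbneg]
      set β := -b with hβ
      clear_value β
      have hβpos : 0 < β := by linarith
      have hd : (0:ℝ) < β - a := by linarith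
      have e1 : (-(a+b)) = β - a := by rw [hβ]; ring
      rw [e1]
      have h1 : (β - a)^(1+c) = (β - a) * (β - a)^c := by
        rw [Real.rpow_add hd, Real.rpow_one]
      have h2 : (β - a)^c ≤ β^c := Real.rpow_le_rpow hd.le (by linarith) hc
      have h3 : β^(2+c) = β * (β * β^c) := by
        rw [show (2:ℝ)+c = 1 + (1+c) by ring, Real.rpow_add hβpos, Real.rpow_one,
          Real.rpow_add hβpos, Real.rpow_one]
      have h4 : a^(2+c) = a * (a * a^c) := by
        rw [show (2:ℝ)+c = 1 + (1+c) by ring, Real.rpow_add ha, Real.rpow_one,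
          Real.rpow_add ha, Real.rpow_one]
      have h5 : a^c ≤ β^c := Real.rpow_le_rpow ha.le hβa.le hc
      have h6 : (1/2:ℝ)^(2+c) ≤ 1/4 := by
        have : (1/2:ℝ)^(2+c) = (1/2) * ((1/2) * (1/2)^c) := by
          rw [show (2:ℝ)+c = 1 + (1+c) by ring, Real.rpow_add (by norm_num), Real.rpow_one,
            Real.rpow_add (by norm_num), Real.rpow_one]
        have h7 : (1/2:ℝ)^c ≤ 1 := Real.rpow_le_one (by norm_num) (by norm_num) hc
        nlinarith
      have hac : (0:ℝ) < a^c := Real.rpow_pos_of_pos ha _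
      have hβc : (0:ℝ) < β^c := Real.rpow_pos_of_pos hβpos _
      have hdc : (0:ℝ) ≤ (β-a)^c := Real.rpow_nonneg hd.le _
      have key : β * (β * β^c) - a * ((β - a) * (β-a)^c) ≥ (3/4) * (a * (a * a^c)) := by
        have step1 : a * ((β - a) * (β-a)^c) ≤ a * ((β - a) * β^c) := by
          have := mul_le_mul_of_nonneg_left h2 (by positivity : (0:ℝ) ≤ a * (β - a))
          nlinarith
        have step2 : β * (β * β^c) - a * ((β - a) * β^c) ≥ (3/4) * (a * (a * β^c)) := by
          nlinarith [sq_nonneg (β - a/2), hβc.le]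
        have step3 : (3/4:ℝ) * (a * (a * a^c)) ≤ (3/4) * (a * (a * β^c)) := by
          nlinarith [mul_le_mul_of_nonneg_left h5 (by positivity : (0:ℝ) ≤ a * a)]
        linarith
      rw [h1, h3, h4]
      nlinarith [mul_pos ha (mul_pos ha hac)]

/-- For every `k ∈ ℕ` and `s ∈ ℕ⁺` there is `ε > 0` with
`a (a+b)^(1+2s/(2k+1)) ≥ ε |a|^(2+2s/(2k+1)) − |b|^(2+2s/(2k+1))` for all `a b : ℝ`,
where the odd-type power is interpreted via `sign (a+b) · |a+b|^(1+2s/(2k+1))`. -/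
theorem young_type_odd_power (k : ℕ) (s : ℕ) (hs : 0 < s) :
    ∃ ε : ℝ, 0 < ε ∧ ∀ a b : ℝ,
      a * Real.sign (a + b) * |a + b| ^ (1 + 2 * (s : ℝ) / (2 * (k : ℝ) + 1)) ≥
        ε * |a| ^ (2 + 2 * (s : ℝ) / (2 * (k : ℝ) + 1))
          - |b| ^ (2 + 2 * (s : ℝ) / (2 * (k : ℝ) + 1)) := by
  set c : ℝ := 2 * (s : ℝ) / (2 * (k : ℝ) + 1) with hcdef
  have hc : 0 ≤ c := by positivity
  refine ⟨(1/2 : ℝ) ^ (2 + c), Real.rpow_pos_of_pos (by norm_num) _, fun a b => ?_⟩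
  rcases lt_trichotomy a 0 with hlt | heq | hgt
  · have h := young_type_key c hc (-a) (-b) (by linarith)
    have e : -a + -b = -(a+b) := by ring
    rw [e, Real.sign_neg, abs_neg, abs_neg] at h
    rw [abs_of_neg hlt]
    nlinarith [h]
  · subst heq
    have h0 : |(0:ℝ)| ^ (2+c) = 0 := by
      rw [abs_zero, Real.zero_rpow (by positivity : (2:ℝ)+c ≠ 0)]
    rw [h0]
    have : (0:ℝ) ≤ |b| ^ (2+c) := Real.rpow_nonneg (abs_nonneg b) _
    simp
    linarith
  · have h := young_type_key c hc a b hgt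
    rw [abs_of_pos hgt]
    linarith
end

section
/- For every real number a > 1, one has (a·√(2a−1) − 2a + 1)/(a−1)² − 1/(2a) > 0. -/
/-- Positivity of the auxiliary function
`h(a) = (a√(2a−1) − 2a + 1)/(a−1)² − 1/(2a)` on `(1,∞)`. -/
theorem aux_h_pos (a : ℝ) (ha : 1 < a) :
    (a * Real.sqrt (2 * a - 1) - 2 * a + 1) / (a - 1) ^ 2 - 1 / (2 * a) > 0 := by
  set s := Real.sqrt (2 * a - 1) with hs
  have hs2 : s ^ 2 = 2 * a - 1 := Real.sq_sqrt (by linarith)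
  have hs1 : 1 < s := by
    nlinarith [Real.sqrt_nonneg (2 * a - 1), hs2]
  have h1 : (0:ℝ) < s - 1 := by linarith
  rw [gt_iff_lt, sub_pos, div_lt_div_iff₀ (by linarith) (by nlinarith)]
  nlinarith [mul_pos (mul_pos h1 h1) h1, sq_nonneg s, hs2, mul_pos (mul_pos (mul_pos h1 h1) h1) (mul_pos h1 h1)]
end

section
/- Let α ∈ (1/2, 1). Then there exists a real number k > 1 lying in the set A = {1 + s/(2k+1) : s ∈ ℕ⁺, k ∈ ℕ} such that 1 − (k√(2k−1) − 2k + 1)/(k² − 2k + 1) < α < 1 − 1/(2k). -/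
/-- The admissible set `A = {1 + s/(2k+1) : s ∈ ℕ⁺, k ∈ ℕ}`. -/
def Aset : Set ℝ := {x : ℝ | ∃ s k : ℕ, 0 < s ∧ x = 1 + (s : ℝ) / (2 * (k : ℝ) + 1)}

lemma key_ineq (a : ℝ) (ha : 1 < a) :
    1 / (2 * a) < (a * Real.sqrt (2 * a - 1) - 2 * a + 1) / (a ^ 2 - 2 * a + 1) := by
  set s := Real.sqrt (2 * a - 1) with hs
  have hs2 : s ^ 2 = 2 * a - 1 := Real.sq_sqrt (by linarith)
  have hspos : 0 < s := Real.sqrt_pos.mpr (by linarith)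
  have hfact : (0:ℝ) < (a - 1) ^ 3 * (8 * a ^ 2 - 5 * a + 1) :=
    mul_pos (pow_pos (by linarith) 3) (by nlinarith [sq_nonneg a])
  have hq : (5 * a ^ 2 - 4 * a + 1) / (2 * a ^ 2) < s := by
    rw [hs, Real.lt_sqrt (div_nonneg (by nlinarith [sq_nonneg a]) (by positivity))]
    rw [div_pow, div_lt_iff₀ (by positivity)]
    nlinarith [hfact]
  have hkey : 5 * a ^ 2 - 4 * a + 1 < 2 * a ^ 2 * s := by
    rw [div_lt_iff₀ (by positivity)] at hq
    linarith
  have hD : (0:ℝ) < a ^ 2 - 2 * a + 1 := by nlinarith [sq_nonneg (a - 1)]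
  have h2a : (0:ℝ) < 2 * a := by linarith
  rw [div_lt_div_iff₀ h2a hD]
  nlinarith [hkey]

/-- For any `α ∈ (1/2, 1)` there is `k > 1` in `A` with
`1 − (k√(2k−1) − 2k + 1)/(k² − 2k + 1) < α < 1 − 1/(2k)`. -/
theorem exists_admissible_k_2d (α : ℝ) (hα1 : 1 / 2 < α) (hα2 : α < 1) :
    ∃ k : ℝ, k ∈ Aset ∧ 1 < k ∧
      1 - (k * Real.sqrt (2 * k - 1) - 2 * k + 1) / (k ^ 2 - 2 * k + 1) < α ∧
      α < 1 - 1 / (2 * k) := by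
  have h1α : 0 < 1 - α := by linarith
  set k₀ : ℝ := 1 / (2 * (1 - α)) with hk₀
  have hk₀1 : 1 < k₀ := by
    rw [hk₀, lt_div_iff₀ (by linarith)]
    linarith
  have hk₀inv : 1 / (2 * k₀) = 1 - α := by
    rw [hk₀]
    field_simp
  -- F k₀ < α
  have hFk₀ : 1 - (k₀ * Real.sqrt (2 * k₀ - 1) - 2 * k₀ + 1) / (k₀ ^ 2 - 2 * k₀ + 1) < α := by
    have := key_ineq k₀ hk₀1
    rw [hk₀inv] at this
    linarith
  -- continuity at k₀
  have hcont : ContinuousAt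
      (fun x : ℝ => 1 - (x * Real.sqrt (2 * x - 1) - 2 * x + 1) / (x ^ 2 - 2 * x + 1)) k₀ := by
    have hD : k₀ ^ 2 - 2 * k₀ + 1 ≠ 0 := by nlinarith [sq_nonneg (k₀ - 1)]
    apply ContinuousAt.sub continuousAt_const
    apply ContinuousAt.div
    · exact ((continuousAt_id.mul ((Real.continuous_sqrt.continuousAt).comp
        (by fun_prop))).sub (by fun_prop)).add continuousAt_const
    · fun_prop
    · exact hD
  have hev : ∀ᶠ y in nhds k₀,
      (fun x : ℝ => 1 - (x * Real.sqrt (2 * x - 1) - 2 * x + 1) / (x ^ 2 - 2 * x + 1)) y < α :=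
    hcont.eventually_lt continuousAt_const hFk₀
  rw [Metric.eventually_nhds_iff] at hev
  obtain ⟨δ, hδ0, hδ⟩ := hev
  -- pick m with 1/(2m+1) < δ
  obtain ⟨m, hm⟩ := exists_nat_gt (1 / δ)
  have hm0 : (0:ℝ) < m := lt_trans (by positivity) hm
  have hden : (0:ℝ) < 2 * (m:ℝ) + 1 := by linarith
  have hsmall : 1 / (2 * (m:ℝ) + 1) < δ := by
    rw [div_lt_iff₀ hden]
    rw [div_lt_iff₀ hδ0] at hm
    nlinarith
  set x : ℝ := (k₀ - 1) * (2 * (m:ℝ) + 1) with hx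
  have hxpos : 0 < x := by
    apply mul_pos (by linarith) hden
  set s : ℕ := Nat.floor x + 1 with hsdef
  have hspos : 0 < s := Nat.succ_pos _
  have hxs1 : x < (s:ℝ) := by
    push_cast [hsdef]
    exact Nat.lt_floor_add_one x
  have hxs2 : (s:ℝ) ≤ x + 1 := by
    push_cast [hsdef]
    have := Nat.floor_le hxpos.le
    linarith
  set k : ℝ := 1 + (s:ℝ) / (2 * (m:ℝ) + 1) with hkdef
  have hk_gt : k₀ < k := by
    have h : k₀ - 1 < (s:ℝ) / (2 * (m:ℝ) + 1) := by
      rw [lt_div_iff₀ hden]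
      calc (k₀ - 1) * (2 * (m:ℝ) + 1) = x := hx.symm
        _ < (s:ℝ) := hxs1
    rw [hkdef]; linarith
  have hk_lt : k < k₀ + δ := by
    have hone : (1 / (2 * (m:ℝ) + 1)) * (2 * (m:ℝ) + 1) = 1 :=
      one_div_mul_cancel hden.ne'
    have h1 : (s:ℝ) / (2 * (m:ℝ) + 1) ≤ (k₀ - 1) + 1 / (2 * (m:ℝ) + 1) := by
      rw [div_le_iff₀ hden]
      nlinarith [hxs2]
    rw [hkdef]
    linarith
  refine ⟨k, ⟨s, m, hspos, hkdef⟩, by linarith, ?_, ?_⟩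
  · have hdist : dist k k₀ < δ := by
      rw [Real.dist_eq, abs_lt]
      constructor <;> linarith
    exact hδ hdist
  · have hkpos : (0:ℝ) < k₀ := by linarith
    have h2 : 1 / (2 * k) < 1 / (2 * k₀) :=
      one_div_lt_one_div_of_lt (by linarith) (by linarith)
    rw [hk₀inv] at h2
    linarith
end

section
/- Let α ∈ (5/6, 1]. For all real numbers ρ > 0, r > 0, u, v: (4α−2)·ρ^(α−1)·u²/r² + α·ρ^(1+α)·(r²v)² − (4−4α)·ρ^α·u·v·r ≥ (3α−2)·(ρ^(α−1)·u²/r² + ρ^(1+α)·(r²v)²). -/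
/-- Coercivity of the 3D radially symmetric viscous dissipation quadratic form
under the BD relation, for `α ∈ (5/6, 1]`. -/
theorem coercivity_3d (α : ℝ) (hα1 : 5 / 6 < α) (hα2 : α ≤ 1)
    (ρ r u v : ℝ) (hρ : 0 < ρ) (hr : 0 < r) :
    (4 * α - 2) * ρ ^ (α - 1) * u ^ 2 / r ^ 2 + α * ρ ^ (1 + α) * (r ^ 2 * v) ^ 2
        - (4 - 4 * α) * ρ ^ α * u * v * r ≥
      (3 * α - 2) * (ρ ^ (α - 1) * u ^ 2 / r ^ 2 + ρ ^ (1 + α) * (r ^ 2 * v) ^ 2) := by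
  set p := ρ ^ ((α - 1) / 2) with hpdef
  set q := ρ ^ ((1 + α) / 2) with hqdef
  have hp : p * p = ρ ^ (α - 1) := by
    rw [hpdef, ← Real.rpow_add hρ]; ring_nf
  have hq : q * q = ρ ^ (1 + α) := by
    rw [hqdef, ← Real.rpow_add hρ]; ring_nf
  have hpq : p * q = ρ ^ α := by
    rw [hpdef, hqdef, ← Real.rpow_add hρ]; ring_nf
  have key : ∀ X Y : ℝ,
      (4 * α - 2) * X ^ 2 + α * Y ^ 2 - (4 - 4 * α) * X * Y ≥
        (3 * α - 2) * (X ^ 2 + Y ^ 2) := by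
    intro X Y
    nlinarith [sq_nonneg (X - Y), sq_nonneg X]
  have h1 : ρ ^ (α - 1) * u ^ 2 / r ^ 2 = (p * u / r) ^ 2 := by
    rw [← hp]; field_simp
  have h2 : ρ ^ (1 + α) * (r ^ 2 * v) ^ 2 = (q * (r ^ 2 * v)) ^ 2 := by
    rw [← hq]; ring
  have h3 : ρ ^ α * u * v * r = (p * u / r) * (q * (r ^ 2 * v)) := by
    rw [← hpq]; field_simp
  have := key (p * u / r) (q * (r ^ 2 * v))
  calc (4 * α - 2) * ρ ^ (α - 1) * u ^ 2 / r ^ 2 + α * ρ ^ (1 + α) * (r ^ 2 * v) ^ 2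
        - (4 - 4 * α) * ρ ^ α * u * v * r
      = (4 * α - 2) * (p * u / r) ^ 2 + α * (q * (r ^ 2 * v)) ^ 2
        - (4 - 4 * α) * ((p * u / r) * (q * (r ^ 2 * v))) := by
        rw [← h1, ← h2, ← h3]; ring
    _ ≥ (3 * α - 2) * ((p * u / r) ^ 2 + (q * (r ^ 2 * v)) ^ 2) := by
        linarith [key (p * u / r) (q * (r ^ 2 * v))]
    _ = (3 * α - 2) * (ρ ^ (α - 1) * u ^ 2 / r ^ 2 + ρ ^ (1 + α) * (r ^ 2 * v) ^ 2) := by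
        rw [h1, h2]
end

section
/- Let α ∈ (1/2, 1) and let n be a real number with 1 < n < n₂(α), where n₂(α) is the unique n > 1 with 1 − (n√(2n−1) − 2n + 1)/(n−1)² = α. Then there exists ε ∈ (0, 1/2) such that (2n(α−1))² / (4(1−2ε)(2n−1)α) < α(1−2ε). -/
/-- Auxiliary: if `0 ≤ P < D` then there is `ε ∈ (0,1/2)` with `P < (1-2ε)² D`. -/
lemma exists_eps_aux (P D : ℝ) (hP : 0 ≤ P) (hPD : P < D) :
    ∃ ε : ℝ, 0 < ε ∧ ε < 1 / 2 ∧ P < (1 - 2 * ε) ^ 2 * D := by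
  have hD : 0 < D := lt_of_le_of_lt hP hPD
  have hK : 0 < D - P := by linarith
  have hden : 0 < D - P + 8 * D := by linarith
  refine ⟨(D - P) / (D - P + 8 * D), div_pos hK hden, ?_, ?_⟩
  · rw [div_lt_iff₀ hden]; linarith
  · set ε := (D - P) / (D - P + 8 * D) with hεdef
    have hεD : 4 * ε * D < D - P := by
      have h : 4 * ε * D = 4 * (D - P) * D / (D - P + 8 * D) := by
        rw [hεdef]; ring
      rw [h, div_lt_iff₀ hden]
      nlinarith [mul_pos hK hD]
    have hε0 : 0 < ε := div_pos hK hden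
    nlinarith [sq_nonneg ε, hD, hεD, mul_pos (mul_pos hε0 hε0) hD]

/-- For `α ∈ (1/2,1)` and `1 < n < n₂(α)` (where `n₂(α)` is the unique `n > 1` with
`1 − (n√(2n−1) − 2n + 1)/(n−1)² = α`), there is `ε ∈ (0,1/2)` with
`(2n(α−1))² / (4(1−2ε)(2n−1)α) < α(1−2ε)`. -/
theorem exists_eps_2d (α n n₂ : ℝ) (hα1 : 1 / 2 < α) (hα2 : α < 1)
    (hn₂ : 1 < n₂)
    (heq : 1 - (n₂ * Real.sqrt (2 * n₂ - 1) - 2 * n₂ + 1) / (n₂ - 1) ^ 2 = α)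
    (hn1 : 1 < n) (hn2 : n < n₂) :
    ∃ ε : ℝ, 0 < ε ∧ ε < 1 / 2 ∧
      (2 * n * (α - 1)) ^ 2 / (4 * (1 - 2 * ε) * (2 * n - 1) * α) < α * (1 - 2 * ε) := by
  have hα0 : 0 < α := by linarith
  set s := Real.sqrt (2 * n₂ - 1) with hs_def
  have hs : s ^ 2 = 2 * n₂ - 1 := Real.sq_sqrt (by linarith)
  have hne : ((n₂ - 1) ^ 2 : ℝ) ≠ 0 := by
    have h : (0:ℝ) < n₂ - 1 := by linarith
    exact pow_ne_zero 2 (ne_of_gt h)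
  have h1 : α * (n₂ - 1) ^ 2 = n₂ ^ 2 - n₂ * s := by
    field_simp at heq
    rw [← heq, sub_mul, div_mul_cancel₀ _ hne]; ring
  have h2 : (α * s - n₂ * (1 - α)) * (n₂ - 1) ^ 2 = 0 := by
    linear_combination (s + n₂) * h1 - n₂ * hs
  have h3 : α * s = n₂ * (1 - α) := by
    rcases mul_eq_zero.1 h2 with h | h
    · linarith
    · exact absurd h hne
  have heq2 : α ^ 2 * (2 * n₂ - 1) = n₂ ^ 2 * (1 - α) ^ 2 := by
    have h4 : (α * s) ^ 2 = (n₂ * (1 - α)) ^ 2 := by rw [h3]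
    nlinarith [h4, hs]
  have hfac : 0 < (n₂ - n) * (2 * n * n₂ - n₂ - n) := by
    have h5 : 0 < n₂ - n := by linarith
    have h6 : 0 < 2 * n * n₂ - n₂ - n := by nlinarith
    exact mul_pos h5 h6
  have hK : n ^ 2 * (1 - α) ^ 2 < α ^ 2 * (2 * n - 1) := by
    nlinarith [heq2, mul_pos (mul_pos hα0 hα0) hfac, sq_nonneg n₂, sq_nonneg n]
  obtain ⟨ε, hε0, hεh, hε3⟩ :=
    exists_eps_aux (n ^ 2 * (1 - α) ^ 2) (α ^ 2 * (2 * n - 1)) (by positivity) hK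
  refine ⟨ε, hε0, hεh, ?_⟩
  have hden : 0 < 4 * (1 - 2 * ε) * (2 * n - 1) * α := by
    have h7 : 0 < 1 - 2 * ε := by linarith
    have h8 : 0 < 2 * n - 1 := by linarith
    positivity
  rw [div_lt_iff₀ hden]
  nlinarith [hε3]
end

section
/- Let α ∈ (2/3, 1) and let n be a real number with 1 < n < n₃(α), where n₃(α) is the unique n > 1 with 1 − (√(4n(4n²−n−1)+1) − 6n + 3)/(4n²−8n+4) = α. Then there exists ε ∈ (0, 1/2) such that (4n(α−1))² / (4(1−2ε)(2n−1)α) < (1−2ε)(4α−2). -/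
lemma aux_eps (A B C : ℝ) (hA : 0 ≤ A) (hB : 0 < B) (hC : 0 < C) (h : A < B * C) :
    ∃ ε : ℝ, 0 < ε ∧ ε < 1 / 2 ∧ A / ((1 - 2 * ε) * B) < (1 - 2 * ε) * C := by
  have hBC : 0 < B * C := mul_pos hB hC
  refine ⟨(B * C - A) / (8 * (B * C)), ?_, ?_, ?_⟩
  · exact div_pos (by linarith) (by linarith)
  · have h8 : (B * C - A) / (8 * (B * C)) ≤ 1 / 8 := by
      rw [div_le_iff₀ (by linarith)]; linarith
    linarith
  · set ε := (B * C - A) / (8 * (B * C)) with hεdef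
    have hs : 1 - 2 * ε = (3 * (B * C) + A) / (4 * (B * C)) := by
      rw [hεdef]; field_simp; ring
    have ht : 0 < 1 - 2 * ε := by
      rw [hs]; exact div_pos (by linarith) (by linarith)
    rw [div_lt_iff₀ (mul_pos ht hB)]
    have e1 : (1 - 2 * ε) * C * ((1 - 2 * ε) * B) = (1 - 2 * ε) ^ 2 * (B * C) := by ring
    rw [e1, hs]
    have e2 : ((3 * (B * C) + A) / (4 * (B * C))) ^ 2 * (B * C)
        = (3 * (B * C) + A) ^ 2 / (16 * (B * C)) := by
      field_simp; ring
    rw [e2, lt_div_iff₀ (by linarith)]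
    nlinarith [mul_pos (show (0:ℝ) < 9 * (B * C) - A by linarith) (show (0:ℝ) < B * C - A by linarith)]

/-- For `α ∈ (2/3,1)` and `1 < n < n₃(α)` (where `n₃(α)` is the unique `n > 1` with
`1 − (√(4n(4n²−n−1)+1) − 6n + 3)/(4n²−8n+4) = α`), there is `ε ∈ (0,1/2)` with
`(4n(α−1))² / (4(1−2ε)(2n−1)α) < (1−2ε)(4α−2)`. -/
theorem exists_eps_3d (α n n₃ : ℝ) (hα1 : 2 / 3 < α) (hα2 : α < 1)
    (hn₃ : 1 < n₃)
    (heq : 1 - (Real.sqrt (4 * n₃ * (4 * n₃ ^ 2 - n₃ - 1) + 1) - 6 * n₃ + 3) /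
        (4 * n₃ ^ 2 - 8 * n₃ + 4) = α)
    (hn1 : 1 < n) (hn2 : n < n₃) :
    ∃ ε : ℝ, 0 < ε ∧ ε < 1 / 2 ∧
      (4 * n * (α - 1)) ^ 2 / (4 * (1 - 2 * ε) * (2 * n - 1) * α) <
        (1 - 2 * ε) * (4 * α - 2) := by
  have hden : (0:ℝ) < 4 * n₃ ^ 2 - 8 * n₃ + 4 := by linarith [mul_pos (show (0:ℝ) < n₃ - 1 by linarith) (show (0:ℝ) < n₃ - 1 by linarith)]
  have hDnn : (0:ℝ) ≤ 4 * n₃ * (4 * n₃ ^ 2 - n₃ - 1) + 1 := by linarith [mul_pos (mul_pos (mul_pos (show (0:ℝ) < n₃ by linarith) (show (0:ℝ) < n₃ - 1 by linarith)) (show (0:ℝ) < n₃ - 1 by linarith)) (show (0:ℝ) < 4 by norm_num), mul_pos (mul_pos (show (0:ℝ) < n₃ by linarith) (show (0:ℝ) < n₃ - 1 by linarith)) (show (0:ℝ) < 7 by norm_num)]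
  have h1 : Real.sqrt (4 * n₃ * (4 * n₃ ^ 2 - n₃ - 1) + 1)
      = (1 - α) * (4 * n₃ ^ 2 - 8 * n₃ + 4) + 6 * n₃ - 3 := by
    have hd : (4 * n₃ ^ 2 - 8 * n₃ + 4) ≠ 0 := ne_of_gt hden
    have e : Real.sqrt (4 * n₃ * (4 * n₃ ^ 2 - n₃ - 1) + 1) - 6 * n₃ + 3 = (1 - α) * (4 * n₃ ^ 2 - 8 * n₃ + 4) := by
      rw [← heq, sub_sub_cancel, div_mul_cancel₀ _ hd]
    linarith
  have h2 : 4 * n₃ * (4 * n₃ ^ 2 - n₃ - 1) + 1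
      = ((1 - α) * (4 * n₃ ^ 2 - 8 * n₃ + 4) + 6 * n₃ - 3) ^ 2 := by
    rw [← h1, Real.sq_sqrt hDnn]
  -- key identity at n₃
  have h8 : (8 * (n₃ - 1) ^ 2) *
      ((2 * n₃ - 1) * (3 * α - 2) - 2 * (1 - α) ^ 2 * (n₃ - 1) ^ 2) = 0 := by
    linear_combination h2
  have key : 2 * (1 - α) ^ 2 * (n₃ - 1) ^ 2 = (2 * n₃ - 1) * (3 * α - 2) := by
    rcases mul_eq_zero.mp h8 with h | h
    · nlinarith
    · linarith
  have key2 : 2 * (1 - α) ^ 2 * n₃ ^ 2 = (2 * n₃ - 1) * (α * (2 * α - 1)) := by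
    linear_combination key
  have key3 : (n - 1) * (2 * (1 - α) ^ 2 * n₃ ^ 2 - (2 * n₃ - 1) * (α * (2 * α - 1))) = 0 := by
    linear_combination (n - 1) * key2
  have h3a : (0:ℝ) < 3 * α - 2 := by linarith
  have hprod : (0:ℝ) ≤ (1 - α) ^ 2 * (n - 1) * (n₃ - n) * (n₃ - 1) := by
    apply mul_nonneg
    apply mul_nonneg
    apply mul_nonneg (sq_nonneg _)
    all_goals linarith
  have hpos : 0 < (n₃ - 1) * ((2 * n - 1) * (α * (2 * α - 1)) - 2 * (1 - α) ^ 2 * n ^ 2) := by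
    have e : (n₃ - 1) * ((2 * n - 1) * (α * (2 * α - 1)) - 2 * (1 - α) ^ 2 * n ^ 2)
        = (3 * α - 2) * (n₃ - n) + 2 * ((1 - α) ^ 2 * (n - 1) * (n₃ - n) * (n₃ - 1))
          - (n - 1) * (2 * (1 - α) ^ 2 * n₃ ^ 2 - (2 * n₃ - 1) * (α * (2 * α - 1))) := by
      ring
    rw [e, key3]
    have h4 : 0 < (3 * α - 2) * (n₃ - n) :=
      mul_pos h3a (by linarith)
    linarith
  have hg : 2 * (1 - α) ^ 2 * n ^ 2 < (2 * n - 1) * (α * (2 * α - 1)) := by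
    rcases mul_pos_iff.mp hpos with ⟨_, h⟩ | ⟨h, _⟩
    · linarith
    · linarith
  have hA : (4 * n * (α - 1)) ^ 2 < (4 * (2 * n - 1) * α) * (4 * α - 2) := by linarith [hg]
  obtain ⟨ε, hε1, hε2, hε3⟩ := aux_eps ((4 * n * (α - 1)) ^ 2) (4 * (2 * n - 1) * α)
    (4 * α - 2) (sq_nonneg _) (by nlinarith) (by linarith) hA
  refine ⟨ε, hε1, hε2, ?_⟩
  rw [show 4 * (1 - 2 * ε) * (2 * n - 1) * α = (1 - 2 * ε) * (4 * (2 * n - 1) * α) from by ring]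
  exact hε3
end
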